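/- Let R = ℝ[t]/(t²) (the dual numbers over ℝ, with ε the class of t satisfying ε² = 0). The evolution algebra A over R with basis (x_i)_{i≥1} and relations x_i·x_i = ε•x_i + x_{i+1}, x_i·x_j = 0 for i ≠ j, is not nilpotent: the plenary powers of x_1 satisfy x_1^{[n]} = ε•x_n + x_{n+1} ≠ 0 for all n ≥ 1, and for every n ≥ 2 there exist elements of A whose left-normed product of length n is nonzero. (Example 3.4, part 2) -/

import Mathlib

/-!
Let `R = ℝ[t]/(t²)` be the ring of dual numbers over `ℝ` (`DualNumber ℝ` in
Mathlib), with `ε = DualNumber.eps` the class of `t`, so `ε ≠ 0` and `ε² = 0`.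
The evolution algebra `A` over `R` has basis `(x_i)_{i ≥ 1}` indexed by `ℕ+`
(underlying module `ℕ+ →₀ DualNumber ℝ`, `x_i = Finsupp.single i 1`) and
relations `x_i · x_i = ε•x_i + x_{i+1}`, `x_i · x_j = 0` for `i ≠ j`;
concretely `(a · b) = ∑_i a(i) * b(i) • (ε • x_i + x_{i+1})`.
-/
noncomputable def evolMul {R : Type*} [CommRing R] {ι : Type*}
    (Csq : ι → ι →₀ R) (a b : ι →₀ R) : ι →₀ R :=
  a.sum fun i ai => (ai * b i) • Csq i

/-- The squares of the basis elements: `x_i · x_i = ε • x_i + x_{i+1}`. -/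
noncomputable def sqD : ℕ+ → (ℕ+ →₀ DualNumber ℝ) := fun i =>
  (DualNumber.eps : DualNumber ℝ) • Finsupp.single i (1 : DualNumber ℝ)
    + Finsupp.single (i + 1) 1

/-- Plenary powers: `plenary mul a n = a^{[n]}` for `n ≥ 1`, defined by
`a^{[1]} = a · a` and `a^{[n+1]} = a^{[n]} · a^{[n]}`. -/
def plenary {A : Type*} (mul : A → A → A) (a : A) : ℕ → A
  | 0 => a
  | n + 1 => mul (plenary mul a n) (plenary mul a n)

/-- Left-normed products: `lnp mul f m = ((f 0 · f 1) · f 2) ⋯ · f m`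
is the left-normed product of the `m + 1` elements `f 0, …, f m`. -/
def lnp {A : Type*} (mul : A → A → A) (f : ℕ → A) : ℕ → A
  | 0 => f 0
  | m + 1 => mul (lnp mul f m) (f (m + 1))

/-!
Multiplying `ε•x_i + x_{i+1}` by any `b` with `ε * b i = 0` and `b (i+1) = 1` gives
`ε•x_{i+1} + x_{i+2}`, because `ε² = 0` kills the contribution of `x_i`. Both
`b = ε•x_i + x_{i+1}` and `b = x_{i+1}` qualify, so the plenary powers of `x_1` and the
left-normed products `x_1 x_1 x_2 ⋯ x_n` both run through the nonzero elements
`ε•x_n + x_{n+1}`.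
-/

section EvolutionAlgebra

variable {R : Type*} [CommRing R] {ι : Type*} (C : ι → ι →₀ R)

theorem evolMul_add_left (a a' b : ι →₀ R) :
    evolMul C (a + a') b = evolMul C a b + evolMul C a' b :=
  Finsupp.sum_add_index' (fun _ => by simp) fun _ _ _ => by rw [add_mul, add_smul]

theorem evolMul_single_left (i : ι) (r : R) (b : ι →₀ R) :
    evolMul C (Finsupp.single i r) b = (r * b i) • C i :=
  Finsupp.sum_single_index (by simp)

end EvolutionAlgebra

section DualNumberEvolution

open DualNumber

theorem sqD_eq (i : ℕ+) : sqD i = Finsupp.single i ε + Finsupp.single (i + 1) 1 := by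
  rw [sqD, Finsupp.smul_single_one]

theorem PNat.add_one_ne_self (i : ℕ+) : i + 1 ≠ i :=
  (PNat.lt_add_right i 1).ne'

theorem sqD_apply_self (i : ℕ+) : sqD i i = ε := by
  simp [sqD_eq, PNat.add_one_ne_self]

theorem sqD_apply_succ (i : ℕ+) : sqD i (i + 1) = 1 := by
  simp [sqD_eq, PNat.add_one_ne_self]

theorem sqD_ne_zero (i : ℕ+) : sqD i ≠ 0 := fun h => by
  simpa [h] using sqD_apply_succ i

theorem evolMul_sqD_sqD_left (i : ℕ+) (b : ℕ+ →₀ DualNumber ℝ) :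
    evolMul sqD (sqD i) b = (ε * b i) • sqD i + b (i + 1) • sqD (i + 1) := by
  conv_lhs => rw [sqD_eq i]
  rw [evolMul_add_left, evolMul_single_left, evolMul_single_left, one_mul]

theorem evolMul_sqD_eq_sqD_succ {i : ℕ+} {b : ℕ+ →₀ DualNumber ℝ}
    (hi : ε * b i = 0) (hsucc : b (i + 1) = 1) :
    evolMul sqD (sqD i) b = sqD (i + 1) := by
  rw [evolMul_sqD_sqD_left, hi, hsucc, zero_smul, one_smul, zero_add]

theorem evolMul_single_one_self (i : ℕ+) :
    evolMul sqD (Finsupp.single i 1) (Finsupp.single i 1) = sqD i := by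
  rw [evolMul_single_left, Finsupp.single_eq_same, one_mul, one_smul]

theorem evolMul_sqD_self (i : ℕ+) : evolMul sqD (sqD i) (sqD i) = sqD (i + 1) :=
  evolMul_sqD_eq_sqD_succ (by rw [sqD_apply_self, eps_mul_eps]) (sqD_apply_succ i)

theorem plenary_single_one_succ (n : ℕ) :
    plenary (evolMul sqD) (Finsupp.single 1 1) (n + 1) = sqD n.succPNat := by
  induction n with
  | zero => exact evolMul_single_one_self 1
  | succ n ih =>
    rw [plenary, ih]
    exact evolMul_sqD_self n.succPNat

theorem plenary_single_one (n : ℕ+) :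
    plenary (evolMul sqD) (Finsupp.single 1 1) n = sqD n := by
  rw [← n.succPNat_natPred]
  exact plenary_single_one_succ n.natPred

-- `Nat.toPNat'` sends `0` to `1`, so the factors are `x_1, x_1, x_2, x_3, …`.
theorem lnp_single_toPNat'_succ (n : ℕ) :
    lnp (evolMul sqD) (fun k => Finsupp.single k.toPNat' 1) (n + 1) = sqD n.succPNat := by
  induction n with
  | zero => exact evolMul_single_one_self 1
  | succ n ih =>
    have hnext : (n + 2).toPNat' = n.succPNat + 1 := rfl
    rw [lnp, ih, hnext]
    exact evolMul_sqD_eq_sqD_succ (by simp [PNat.add_one_ne_self]) (by simp)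

theorem exists_lnp_ne_zero {n : ℕ} (hn : 2 ≤ n) :
    ∃ f : ℕ → (ℕ+ →₀ DualNumber ℝ), lnp (evolMul sqD) f (n - 1) ≠ 0 := by
  obtain ⟨m, hm⟩ : ∃ m, n - 1 = m + 1 := ⟨n - 2, by omega⟩
  exact ⟨_, by rw [hm, lnp_single_toPNat'_succ]; exact sqD_ne_zero _⟩

end DualNumberEvolution

/-- Example 3.4, part 2: The evolution algebra over the dual
numbers `R = ℝ[t]/(t²)` with `x_i·x_i = ε•x_i + x_{i+1}` is not nilpotent: the
plenary powers of `x_1` satisfy `x_1^{[n]} = ε•x_n + x_{n+1} ≠ 0` for all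
`n ≥ 1`, for every `n ≥ 2` some left-normed product of `n` elements is
nonzero, and hence there is no `n ≥ 2` making all left-normed products of `n`
elements vanish. -/
theorem example_dual_numbers_not_nilpotent :
    (∀ n : ℕ+, plenary (evolMul sqD) (Finsupp.single 1 1) (n : ℕ)
        = (DualNumber.eps : DualNumber ℝ) • Finsupp.single n (1 : DualNumber ℝ)
            + Finsupp.single (n + 1) 1) ∧
    (∀ n : ℕ+, plenary (evolMul sqD) (Finsupp.single 1 1) (n : ℕ) ≠ 0) ∧
    (∀ n : ℕ, 2 ≤ n →
        ∃ f : ℕ → (ℕ+ →₀ DualNumber ℝ), lnp (evolMul sqD) f (n - 1) ≠ 0) ∧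
    ¬ (∃ n : ℕ, 2 ≤ n ∧
        ∀ f : ℕ → (ℕ+ →₀ DualNumber ℝ), lnp (evolMul sqD) f (n - 1) = 0) := by
  refine ⟨plenary_single_one, fun n => plenary_single_one n ▸ sqD_ne_zero n,
    fun _ => exists_lnp_ne_zero, ?_⟩
  rintro ⟨n, hn, hzero⟩
  obtain ⟨f, hf⟩ := exists_lnp_ne_zero hn
  exact hf (hzero f)
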